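/- arXiv:2510.00598 — 2 statements merged into one kernel-verified Lean document; each statement's English description precedes it below -/
import Mathlib

section
/- ∫₀¹ ∫₀¹ g(s,t)² / (m(s)·m(t)) ds dt = π²/3 − 3, which is the constant D_wls appearing in the limit covariance kernel for the heteroscedasticity-weighted least squares version of the test. -/
/-- `m(s) = s(1-s)`. -/
noncomputable def m (s : ℝ) : ℝ := s * (1 - s)

/-- `g(s,t) = min(s,t)·(1 - max(s,t))`. -/
noncomputable def g (s t : ℝ) : ℝ := min s t * (1 - max s t)

/-!
For fixed `s ∈ (0,1)` the integrand is `(1-s)/s · t/(1-t)` for `t < s`, and the symmetry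
`g(1-s,1-t) = g(s,t)`, `m(1-s) = m(s)` reduces `t > s` to that case. Hence the inner integral is
`-1 + φ(1-s) + φ(s)` with `φ(x) = x log(1/x)/(1-x)`. Expanding `x/(1-x)` as a geometric series and
using `∫₀¹ xⁿ log(1/x) dx = 1/(n+1)²` gives `∫₀¹ φ = ζ(2) - 1 = π²/6 - 1`, so the double integral
is `-1 + 2(π²/6 - 1) = π²/3 - 3`.
-/

open MeasureTheory Real Set intervalIntegral

theorem setIntegral_Ioo_comp_sub_left {E : Type*} [NormedAddCommGroup E] [NormedSpace ℝ E]
    (f : ℝ → E) (a b c : ℝ) :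
    ∫ x in Ioo (c - b) (c - a), f (c - x) = ∫ x in Ioo a b, f x := by
  simpa [preimage_const_sub_Ioo] using
    (volume.measurePreserving_sub_left c).setIntegral_preimage_emb
      (measurableEmbedding_subLeft c) f (Ioo a b)

theorem integrableOn_Ioo_comp_sub_left {E : Type*} [NormedAddCommGroup E] {f : ℝ → E} {a b : ℝ}
    (hf : IntegrableOn f (Ioo a b)) (c : ℝ) :
    IntegrableOn (fun x => f (c - x)) (Ioo (c - b) (c - a)) := by
  rw [← preimage_const_sub_Ioo]
  exact ((volume.measurePreserving_sub_left c).integrableOn_comp_preimage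
    (measurableEmbedding_subLeft c)).2 hf

theorem intervalIntegrable_pow_mul_neg_log (n : ℕ) :
    IntervalIntegrable (fun x : ℝ => x ^ n * -log x) volume 0 1 :=
  intervalIntegrable_log'.neg.continuousOn_mul (continuous_pow n).continuousOn

theorem integral_pow_mul_neg_log (n : ℕ) :
    ∫ x in (0:ℝ)..1, x ^ n * -log x = 1 / ((n : ℝ) + 1) ^ 2 := by
  let F : ℝ → ℝ := fun x => x ^ (n + 1) * (1 / ((n : ℝ) + 1) ^ 2 - log x / ((n : ℝ) + 1))
  have hF : Continuous F := by
    -- `x ^ (n + 1) * log x = x ^ n * (x * log x)` is continuous at `0`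
    have : F = fun x => x ^ (n + 1) / ((n : ℝ) + 1) ^ 2 - x ^ n * (x * log x) / ((n : ℝ) + 1) := by
      funext x; ring
    rw [this]
    have := continuous_mul_log
    fun_prop
  have hderiv : ∀ x ∈ Ioo (0:ℝ) 1, HasDerivAt F (x ^ n * -log x) x := by
    intro x hx
    have hx0 : x ≠ 0 := hx.1.ne'
    refine ((hasDerivAt_pow (n + 1) x).fun_mul
      (((hasDerivAt_log hx0).div_const ((n : ℝ) + 1)).const_sub
        (1 / ((n : ℝ) + 1) ^ 2))).congr_deriv ?_
    field_simp
    push_cast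
    ring
  rw [integral_eq_sub_of_hasDerivAt_of_le zero_le_one hF.continuousOn hderiv
    (intervalIntegrable_pow_mul_neg_log n)]
  simp [F]

theorem mul_neg_log_le_one_sub {x : ℝ} (hx : 0 < x) : x * -log x ≤ 1 - x := by
  have := one_sub_inv_le_log_of_pos hx
  calc x * -log x ≤ x * (x⁻¹ - 1) := by gcongr; linarith
    _ = 1 - x := by field_simp

theorem integrableOn_mul_neg_log_div_one_sub :
    IntegrableOn (fun x => x * -log x / (1 - x)) (Ioo 0 1) := by
  refine IntegrableOn.of_bound (by simp) (Measurable.aestronglyMeasurable (by fun_prop)) 1 ?_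
  refine ae_restrict_of_forall_mem measurableSet_Ioo fun x hx => ?_
  have h1x : 0 < 1 - x := sub_pos.2 hx.2
  have hnonneg : 0 ≤ x * -log x := mul_nonneg hx.1.le (neg_nonneg.2 (log_nonpos hx.1.le hx.2.le))
  rw [norm_of_nonneg (div_nonneg hnonneg h1x.le), div_le_one h1x]
  exact mul_neg_log_le_one_sub hx.1

theorem integral_mul_neg_log_div_one_sub :
    ∫ x in Ioo (0:ℝ) 1, x * -log x / (1 - x) = π ^ 2 / 6 - 1 := by
  let F : ℕ → ℝ → ℝ := fun n x => x ^ (n + 1) * -log x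
  have hF_int (n : ℕ) : IntegrableOn (F n) (Ioo 0 1) :=
    (intervalIntegrable_iff_integrableOn_Ioo_of_le zero_le_one).1
      (intervalIntegrable_pow_mul_neg_log (n + 1))
  have hF_integral (n : ℕ) : ∫ x in Ioo (0:ℝ) 1, F n x = 1 / ((n : ℝ) + 2) ^ 2 := by
    rw [← integral_Ioc_eq_integral_Ioo, ← integral_of_le zero_le_one, integral_pow_mul_neg_log]
    push_cast
    ring
  have hF_norm (n : ℕ) : ∫ x in Ioo (0:ℝ) 1, ‖F n x‖ = ∫ x in Ioo (0:ℝ) 1, F n x :=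
    setIntegral_congr_fun measurableSet_Ioo fun x hx =>
      norm_of_nonneg (mul_nonneg (pow_nonneg hx.1.le _) (neg_nonneg.2 (log_nonpos hx.1.le hx.2.le)))
  have hF_tsum : EqOn (fun x => ∑' n, F n x) (fun x => x * -log x / (1 - x)) (Ioo 0 1) := by
    intro x hx
    simp only [F, pow_succ', mul_assoc, tsum_mul_left, tsum_mul_right,
      tsum_geometric_of_lt_one hx.1.le hx.2]
    ring
  -- the `n = 0` term of `hasSum_zeta_two` is `1 / 0 ^ 2 = 0`
  have hzeta : HasSum (fun n : ℕ => 1 / ((n : ℝ) + 2) ^ 2) (π ^ 2 / 6 - 1) := by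
    simpa [Finset.sum_range_succ, add_assoc, one_add_one_eq_two] using
      (hasSum_nat_add_iff' 2).2 hasSum_zeta_two
  have hsum := hasSum_integral_of_summable_integral_norm hF_int
    (by simpa only [hF_norm, hF_integral] using hzeta.summable)
  rw [← setIntegral_congr_fun measurableSet_Ioo hF_tsum]
  simp only [hF_integral] at hsum
  exact hsum.unique hzeta

theorem one_sub_ne_zero_of_mem_uIcc {s t : ℝ} (hs : s < 1) (ht : t ∈ uIcc 0 s) : 1 - t ≠ 0 :=
  (sub_pos.2 ((le_max_iff.1 ht.2).elim (·.trans_lt zero_lt_one) (·.trans_lt hs))).ne'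

theorem intervalIntegrable_div_one_sub {s : ℝ} (hs : s < 1) :
    IntervalIntegrable (fun t => t / (1 - t)) volume 0 s :=
  (continuousOn_id.div (by fun_prop) fun _ => one_sub_ne_zero_of_mem_uIcc hs).intervalIntegrable

theorem integral_div_one_sub {s : ℝ} (hs : s < 1) :
    ∫ t in (0:ℝ)..s, t / (1 - t) = -s - log (1 - s) := by
  have hderiv : ∀ t ∈ uIcc 0 s, HasDerivAt (fun t => -t - log (1 - t)) (t / (1 - t)) t := by
    intro t ht
    refine ((hasDerivAt_neg t).sub (((hasDerivAt_id t).const_sub 1).log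
      (one_sub_ne_zero_of_mem_uIcc hs ht))).congr_deriv ?_
    simp only [id_eq]
    field_simp [one_sub_ne_zero_of_mem_uIcc hs ht]
    ring
  rw [integral_eq_sub_of_hasDerivAt hderiv (intervalIntegrable_div_one_sub hs)]
  simp

theorem m_one_sub (s : ℝ) : m (1 - s) = m s := by
  simp only [m]; ring

theorem g_one_sub (s t : ℝ) : g (1 - s) (1 - t) = g s t := by
  simp only [g, min_sub_sub_left, max_sub_sub_left, sub_sub_cancel]
  ring

theorem eqOn_g_sq_div_Ioo {s : ℝ} (hs : s < 1) :
    EqOn (fun t => g s t ^ 2 / (m s * m t)) (fun t => (1 - s) / s * (t / (1 - t))) (Ioo 0 s) := by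
  intro t ⟨ht0, hts⟩
  have h1t : 1 - t ≠ 0 := (sub_pos.2 (hts.trans hs)).ne'
  have h1s : 1 - s ≠ 0 := (sub_pos.2 hs).ne'
  simp only [g, m, min_eq_right hts.le, max_eq_left hts.le]
  field_simp [ht0.ne', (ht0.trans hts).ne']

theorem intervalIntegrable_g_sq_div {s : ℝ} (hs : s ∈ Ioo 0 1) :
    IntervalIntegrable (fun t => g s t ^ 2 / (m s * m t)) volume 0 s :=
  ((intervalIntegrable_div_one_sub hs.2).const_mul _).congr_uIoo
    (uIoo_of_le hs.1.le ▸ eqOn_g_sq_div_Ioo hs.2).symm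

theorem integral_g_sq_div_zero_self {s : ℝ} (hs : s ∈ Ioo 0 1) :
    ∫ t in (0:ℝ)..s, g s t ^ 2 / (m s * m t) = (1 - s) / s * (-s - log (1 - s)) := by
  rw [integral_congr_uIoo (uIoo_of_le hs.1.le ▸ eqOn_g_sq_div_Ioo hs.2),
    intervalIntegral.integral_const_mul, integral_div_one_sub hs.2]

-- the right side is `-1 + φ (1 - s) + φ s` with `φ x = x * -log x / (1 - x)`, left unsimplified
theorem setIntegral_g_sq_div {s : ℝ} (hs : s ∈ Ioo 0 1) :
    ∫ t in Ioo (0:ℝ) 1, g s t ^ 2 / (m s * m t) =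
      -1 + (1 - s) * -log (1 - s) / (1 - (1 - s)) + s * -log s / (1 - s) := by
  have hs' : 1 - s ∈ Ioo 0 1 := ⟨sub_pos.2 hs.2, sub_lt_self 1 hs.1⟩
  have hsymm : (fun t => g s t ^ 2 / (m s * m t)) =
      fun t => g (1 - s) (1 - t) ^ 2 / (m (1 - s) * m (1 - t)) := by
    simp only [g_one_sub, m_one_sub]
  have hupper : IntervalIntegrable (fun t => g s t ^ 2 / (m s * m t)) volume s 1 := by
    rw [hsymm]
    simpa using ((intervalIntegrable_g_sq_div hs').comp_sub_left 1).symm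
  have hupper_eq : ∫ t in s..1, g s t ^ 2 / (m s * m t) =
      ∫ t in (0:ℝ)..1 - s, g (1 - s) t ^ 2 / (m (1 - s) * m t) := by
    rw [hsymm, integral_comp_sub_left (fun t => g (1 - s) t ^ 2 / (m (1 - s) * m t)), sub_self]
  rw [← integral_Ioc_eq_integral_Ioo, ← integral_of_le zero_le_one,
    ← integral_add_adjacent_intervals (intervalIntegrable_g_sq_div hs) hupper, hupper_eq,
    integral_g_sq_div_zero_self hs, integral_g_sq_div_zero_self hs', sub_sub_cancel]
  field_simp [hs.1.ne', hs'.1.ne']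
  ring

/-- `∫₀¹∫₀¹ g(s,t)²/(m(s)m(t)) ds dt = π²/3 - 3` (integral over the
open unit square). -/
theorem stmt5 :
    ∫ s in Set.Ioo (0 : ℝ) 1, ∫ t in Set.Ioo (0 : ℝ) 1,
        (g s t) ^ 2 / (m s * m t) = Real.pi ^ 2 / 3 - 3 := by
  have hφ := integrableOn_mul_neg_log_div_one_sub
  have hφ_refl : IntegrableOn (fun x => (1 - x) * -log (1 - x) / (1 - (1 - x))) (Ioo 0 1) := by
    simpa using integrableOn_Ioo_comp_sub_left hφ 1
  have hconst : IntegrableOn (fun _ => (-1 : ℝ)) (Ioo (0 : ℝ) 1) := integrableOn_const (by simp)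
  rw [setIntegral_congr_fun measurableSet_Ioo fun s hs => setIntegral_g_sq_div hs,
    integral_add (hconst.fun_add hφ_refl) hφ, integral_add hconst hφ_refl]
  have hrefl := setIntegral_Ioo_comp_sub_left (fun x => x * -log x / (1 - x)) 0 1 1
  simp only [sub_self, sub_zero] at hrefl
  rw [hrefl, integral_mul_neg_log_div_one_sub]
  rw [setIntegral_const, volume_real_Ioo_of_le zero_le_one, smul_eq_mul]
  ring
end

section
/- Let N ≥ 1 and T ≥ 2 be integers, θ ∈ (0,1), t₀ = ⌊Tθ⌋, and consider panel data Y_{i,t} = μ_i + δ_i·1(t > t₀) + e_{i,t}, i = 1,…,N, t = 1,…,T, where μ_i, δ_i are real constants and, for each i, e_{i,1},…,e_{i,T} are independent, square-integrable, with mean 0 and variance σ_i². Let w_1,…,w_{T−1} be nonnegative weights, not all zero. Then the weighted least squares estimator satisfies exactly E[ σ̂²_{N,T}(w) ] = N^{−1} Σ_{i=1}^N σ_i² + h_T(θ; w) · (T/N) · Σ_{i=1}^N δ_i², where h_T(θ; w) = ( Σ_{k=1}^{T−1} m_T(k/T)² w_k )^{−1} · Σ_{k=1}^{T−1} g(⌊Tθ⌋/T,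 k/T)² · m_T(k/T) w_k. In particular, since h_T(θ;w) ≥ 0, the estimator is biased upwards in the presence of a change. -/
/-!
At a grid point `k / T` the CUSUM is a linear functional of the data with weights
`T^{-1/2} (1(t ≤ k) - k / T)`. These weights sum to zero, so the panel mean drops out; against
the step `δ · 1(t > t₀)` they give the deterministic term `-√T δ g(t₀/T, k/T)`; and their squares
sum to `m(k/T)`, so by independence the noise contributes variance `σ² m(k/T)`. Hence
`E Z(k/T)² = σ² m(k/T) + T δ² g(t₀/T, k/T)²`, and normalising by `∑ m(k/T)² w_k` turns the
first term into exactly `σ²`.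
-/

open MeasureTheory ProbabilityTheory

/-- CUSUM process of the data `Y 1, …, Y T`:
`Z(s) = T^{-1/2} ∑_{k=1}^{⌊Ts⌋} (Y k - Ȳ_T)`. -/
noncomputable def cusum (T : ℕ) (Y : ℕ → ℝ) (s : ℝ) : ℝ :=
  (Real.sqrt T)⁻¹ * ∑ k ∈ Finset.Icc 1 (⌊(T : ℝ) * s⌋.toNat),
    (Y k - (T : ℝ)⁻¹ * ∑ t ∈ Finset.Icc 1 T, Y t)

open Finset

lemma m_pos {s : ℝ} (hs : s ∈ Set.Ioo 0 1) : 0 < m s := mul_pos hs.1 (sub_pos.2 hs.2)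

lemma natCast_div_mem_Ioo {k T : ℕ} (hk : k ∈ Icc 1 (T - 1)) : (k : ℝ) / T ∈ Set.Ioo 0 1 := by
  rw [mem_Icc] at hk
  have hkT : (k : ℝ) < T := by exact_mod_cast (by omega : k < T)
  have hk0 : (0 : ℝ) < k := by exact_mod_cast (by omega : 0 < k)
  exact ⟨div_pos hk0 (by linarith), (div_lt_one (by linarith)).2 hkT⟩

lemma sum_m_sq_mul_pos {T : ℕ} {w : ℕ → ℝ} (hw : ∀ k ∈ Icc 1 (T - 1), 0 ≤ w k)
    (hw0 : ∃ k ∈ Icc 1 (T - 1), w k ≠ 0) :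
    0 < ∑ k ∈ Icc 1 (T - 1), m ((k : ℝ) / T) ^ 2 * w k := by
  obtain ⟨k₀, hk₀, hwk₀⟩ := hw0
  exact sum_pos' (fun k hk => mul_nonneg (sq_nonneg _) (hw k hk))
    ⟨k₀, hk₀, mul_pos (pow_pos (m_pos (natCast_div_mem_Ioo hk₀)) 2) ((hw k₀ hk₀).lt_of_ne' hwk₀)⟩

lemma sum_sq_mul_m_mul_nonneg {T : ℕ} {w : ℕ → ℝ} (hw : ∀ k ∈ Icc 1 (T - 1), 0 ≤ w k)
    (f : ℕ → ℝ) : 0 ≤ ∑ k ∈ Icc 1 (T - 1), f k ^ 2 * m ((k : ℝ) / T) * w k :=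
  sum_nonneg fun k hk =>
    mul_nonneg (mul_nonneg (sq_nonneg _) (m_pos (natCast_div_mem_Ioo hk)).le) (hw k hk)

lemma le_of_natCast_eq_floor_mul {t₀ T : ℕ} {θ : ℝ} (ht₀ : (t₀ : ℤ) = ⌊(T : ℝ) * θ⌋)
    (hθ : θ ≤ 1) : t₀ ≤ T := by
  have : (t₀ : ℝ) ≤ T := calc
    (t₀ : ℝ) = ((t₀ : ℤ) : ℝ) := rfl
    _ ≤ T * θ := ht₀ ▸ Int.floor_le _
    _ ≤ T := mul_le_of_le_one_right (Nat.cast_nonneg T) hθ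
  exact_mod_cast this

lemma sum_Icc_ite_le (f : ℕ → ℝ) {k n : ℕ} (hk : k ≤ n) :
    ∑ t ∈ Icc 1 n, (if t ≤ k then f t else 0) = ∑ t ∈ Icc 1 k, f t := by
  rw [← sum_filter]
  congr 1
  ext t
  simp only [mem_filter, mem_Icc]
  omega

lemma sum_Icc_ite_lt (t₀ n : ℕ) :
    ∑ t ∈ Icc 1 n, (if t₀ < t then (1 : ℝ) else 0) = ((n - t₀ : ℕ) : ℝ) := by
  rw [sum_boole, ← Nat.card_Ioc t₀ n]
  congr 2
  ext t
  simp only [mem_filter, mem_Icc, mem_Ioc]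
  omega

noncomputable def cusumWeight (T k t : ℕ) : ℝ :=
  (Real.sqrt T)⁻¹ * ((if t ≤ k then 1 else 0) - k / T)

lemma sum_cusumWeight_mul {T k : ℕ} (hk : k ≤ T) (f : ℕ → ℝ) :
    ∑ t ∈ Icc 1 T, cusumWeight T k t * f t
      = (Real.sqrt T)⁻¹ * (∑ t ∈ Icc 1 k, f t - k / T * ∑ t ∈ Icc 1 T, f t) := by
  simp only [cusumWeight, mul_assoc, ← mul_sum, sub_mul, sum_sub_distrib, ite_mul, one_mul,
    zero_mul, sum_Icc_ite_le f hk]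

lemma cusum_natCast_div {T k : ℕ} (hT : T ≠ 0) (hk : k ≤ T) (Y : ℕ → ℝ) :
    cusum T Y (k / T) = ∑ t ∈ Icc 1 T, cusumWeight T k t * Y t := by
  have hfloor : (⌊(T : ℝ) * (k / T)⌋).toNat = k := by
    rw [mul_div_cancel₀ _ (Nat.cast_ne_zero.2 hT), Int.floor_natCast, Int.toNat_natCast]
  rw [sum_cusumWeight_mul hk, cusum, hfloor, sum_sub_distrib, sum_const, Nat.card_Icc,
    nsmul_eq_mul, Nat.add_sub_cancel]
  ring

lemma sum_cusumWeight {T k : ℕ} (hT : T ≠ 0) (hk : k ≤ T) :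
    ∑ t ∈ Icc 1 T, cusumWeight T k t = 0 := by
  simpa [Nat.card_Icc, hT] using sum_cusumWeight_mul hk (fun _ => 1)

lemma sum_cusumWeight_sq {T k : ℕ} (hT : T ≠ 0) (hk : k ≤ T) :
    ∑ t ∈ Icc 1 T, cusumWeight T k t ^ 2 = m (k / T) := by
  have hleft : ∑ t ∈ Icc 1 k, cusumWeight T k t = k * ((Real.sqrt T)⁻¹ * (1 - k / T)) := by
    rw [sum_congr rfl fun t ht => by rw [cusumWeight, if_pos (mem_Icc.1 ht).2], sum_const,
      Nat.card_Icc, nsmul_eq_mul, Nat.add_sub_cancel]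
  have hsqrt : (Real.sqrt T)⁻¹ * (Real.sqrt T)⁻¹ = (T : ℝ)⁻¹ := by
    rw [← mul_inv, Real.mul_self_sqrt (Nat.cast_nonneg T)]
  -- expand one factor of `w²` as a weight: the weights sum to zero, so only `∑_{t ≤ k} w_t` is left
  simp only [sq]
  rw [sum_cusumWeight_mul hk, sum_cusumWeight hT hk, hleft, m]
  linear_combination (k : ℝ) * (1 - k / T) * hsqrt

lemma sum_cusumWeight_mul_step {T t₀ k : ℕ} (hT : T ≠ 0) (ht₀ : t₀ ≤ T) (hk : k ≤ T) :
    ∑ t ∈ Icc 1 T, cusumWeight T k t * (if t₀ < t then 1 else 0)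
      = -Real.sqrt T * g (t₀ / T) (k / T) := by
  have hT' : (T : ℝ) ≠ 0 := Nat.cast_ne_zero.2 hT
  have hcount : ((k - t₀ : ℕ) : ℝ) - k / T * ((T - t₀ : ℕ) : ℝ) = -T * g (t₀ / T) (k / T) := by
    rw [Nat.cast_sub ht₀]
    rcases le_total k t₀ with hkt | htk
    · have hkt' : (k : ℝ) / T ≤ t₀ / T := by gcongr
      rw [Nat.sub_eq_zero_of_le hkt, g, min_eq_right hkt', max_eq_left hkt']
      field_simp
      ring
    · have htk' : (t₀ : ℝ) / T ≤ k / T := by gcongr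
      rw [Nat.cast_sub htk, g, min_eq_left htk', max_eq_right htk']
      field_simp
      ring
  have hsqrt : (Real.sqrt T)⁻¹ * T = Real.sqrt T := by
    rw [inv_mul_eq_div, Real.div_sqrt]
  rw [sum_cusumWeight_mul hk, sum_Icc_ite_lt, sum_Icc_ite_lt, hcount]
  linear_combination (-g (t₀ / T) (k / T)) * hsqrt

lemma cusum_meanShift {T t₀ k : ℕ} (hT : T ≠ 0) (ht₀ : t₀ ≤ T) (hk : k ≤ T) (a b : ℝ)
    (ε : ℕ → ℝ) :
    cusum T (fun t => a + b * (if t₀ < t then 1 else 0) + ε t) (k / T)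
      = -Real.sqrt T * b * g (t₀ / T) (k / T) + ∑ t ∈ Icc 1 T, cusumWeight T k t * ε t := by
  have hconst : ∑ t ∈ Icc 1 T, cusumWeight T k t * a = 0 := by
    rw [← sum_mul, sum_cusumWeight hT hk, zero_mul]
  have hstep : ∑ t ∈ Icc 1 T, cusumWeight T k t * (b * if t₀ < t then 1 else 0)
      = -Real.sqrt T * b * g (t₀ / T) (k / T) := by
    simp only [mul_left_comm _ b, ← mul_sum, sum_cusumWeight_mul_step hT ht₀ hk]
    ring
  simp only [cusum_natCast_div hT hk, mul_add, sum_add_distrib, hconst, hstep, zero_add]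

section Moments

variable {Ω : Type*} [MeasurableSpace Ω] {P : Measure Ω}

lemma variance_sum_const_mul_of_iIndepFun {ι : Type*} {s : Finset ι} {e : ι → Ω → ℝ}
    {σ2 : ℝ} (hindep : iIndepFun (fun i : s => e i) P) (hL2 : ∀ i ∈ s, MemLp (e i) 2 P)
    (hvar : ∀ i ∈ s, Var[e i; P] = σ2) (c : ι → ℝ) :
    Var[fun ω => ∑ i ∈ s, c i * e i ω; P] = σ2 * ∑ i ∈ s, c i ^ 2 := by
  have hfun : (fun ω => ∑ i ∈ s, c i * e i ω) = ∑ i ∈ s, fun ω => c i * e i ω := by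
    ext ω
    simp only [Finset.sum_apply]
  have hpair : Set.Pairwise ↑s fun i j =>
      IndepFun (fun ω => c i * e i ω) (fun ω => c j * e j ω) P := by
    intro i hi j hj hij
    exact (hindep.indepFun (i := ⟨i, hi⟩) (j := ⟨j, hj⟩) (by simpa using hij)).comp
      (measurable_const_mul (c i)) (measurable_const_mul (c j))
  rw [hfun, IndepFun.variance_sum (fun i hi => (hL2 i hi).const_mul (c i)) hpair, mul_sum]
  exact sum_congr rfl fun i hi => by rw [variance_const_mul, hvar i hi, mul_comm]

lemma integral_const_add_sq [IsProbabilityMeasure P] {X : Ω → ℝ} (hX : MemLp X 2 P)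
    (hmean : ∫ ω, X ω ∂P = 0) (c : ℝ) :
    ∫ ω, (c + X ω) ^ 2 ∂P = c ^ 2 + Var[X; P] := by
  have hvar := variance_eq_sub (X := fun ω => c + X ω) ((memLp_const c).add hX)
  have hint : ∫ ω, c + X ω ∂P = c := by
    rw [integral_add (integrable_const c) (hX.integrable one_le_two), hmean]
    simp
  rw [variance_const_add hX.aestronglyMeasurable, hint] at hvar
  simp only [Pi.pow_apply] at hvar
  linarith

lemma memLp_cusum_of_meanShift [IsFiniteMeasure P] {T t₀ k : ℕ} (hT : T ≠ 0) (ht₀ : t₀ ≤ T)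
    (hk : k ≤ T) {a b : ℝ} {e Y : ℕ → Ω → ℝ}
    (hY : ∀ t ω, Y t ω = a + b * (if t₀ < t then 1 else 0) + e t ω)
    (hL2 : ∀ t ∈ Icc 1 T, MemLp (e t) 2 P) :
    MemLp (fun ω => cusum T (fun t => Y t ω) (k / T)) 2 P := by
  simp only [hY, cusum_meanShift hT ht₀ hk]
  exact (memLp_const (-Real.sqrt T * b * g (t₀ / T) (k / T))).add
    (memLp_finsetSum _ fun t ht => (hL2 t ht).const_mul (cusumWeight T k t))

lemma integral_cusum_sq_of_meanShift [IsProbabilityMeasure P] {T t₀ k : ℕ} (hT : T ≠ 0)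
    (ht₀ : t₀ ≤ T) (hk : k ≤ T) {a b σ2 : ℝ} {e Y : ℕ → Ω → ℝ}
    (hY : ∀ t ω, Y t ω = a + b * (if t₀ < t then 1 else 0) + e t ω)
    (hindep : iIndepFun (fun t : Icc 1 T => e t) P) (hL2 : ∀ t ∈ Icc 1 T, MemLp (e t) 2 P)
    (hmean : ∀ t ∈ Icc 1 T, ∫ ω, e t ω ∂P = 0)
    (hvar : ∀ t ∈ Icc 1 T, ∫ ω, e t ω ^ 2 ∂P = σ2) :
    ∫ ω, cusum T (fun t => Y t ω) (k / T) ^ 2 ∂P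
      = σ2 * m (k / T) + T * b ^ 2 * g (t₀ / T) (k / T) ^ 2 := by
  have hX : MemLp (fun ω => ∑ t ∈ Icc 1 T, cusumWeight T k t * e t ω) 2 P :=
    memLp_finsetSum _ fun t ht => (hL2 t ht).const_mul _
  have hXmean : ∫ ω, ∑ t ∈ Icc 1 T, cusumWeight T k t * e t ω ∂P = 0 := by
    rw [integral_finsetSum _ fun t ht => ((hL2 t ht).integrable one_le_two).const_mul _]
    exact sum_eq_zero fun t ht => by rw [integral_const_mul, hmean t ht, mul_zero]
  have hvar' : ∀ t ∈ Icc 1 T, Var[e t; P] = σ2 := fun t ht => by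
    rw [variance_of_integral_eq_zero (hL2 t ht).aemeasurable (hmean t ht), hvar t ht]
  simp only [hY, cusum_meanShift hT ht₀ hk]
  rw [integral_const_add_sq hX hXmean, variance_sum_const_mul_of_iIndepFun hindep hL2 hvar',
    sum_cusumWeight_sq hT hk, mul_pow, mul_pow, neg_sq, Real.sq_sqrt (Nat.cast_nonneg T)]
  ring

end Moments

theorem stmt16_general {Ω : Type*} [MeasurableSpace Ω] (P : Measure Ω) [IsProbabilityMeasure P]
    (N T : ℕ) (hT : 2 ≤ T)
    (θ : ℝ) (hθ : θ ∈ Set.Ioo (0 : ℝ) 1) (t₀ : ℕ) (ht₀ : (t₀ : ℤ) = ⌊(T : ℝ) * θ⌋)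
    (μ δ : ℕ → ℝ) (σ2 : ℕ → ℝ) (e : ℕ → ℕ → Ω → ℝ)
    (hindep : ∀ i ∈ Finset.Icc 1 N,
      iIndepFun (fun k : (Finset.Icc 1 T) => e i (k : ℕ)) P)
    (hL2 : ∀ i ∈ Finset.Icc 1 N, ∀ t ∈ Finset.Icc 1 T, MemLp (e i t) 2 P)
    (hmean : ∀ i ∈ Finset.Icc 1 N, ∀ t ∈ Finset.Icc 1 T, ∫ ω, e i t ω ∂P = 0)
    (hvar : ∀ i ∈ Finset.Icc 1 N, ∀ t ∈ Finset.Icc 1 T, ∫ ω, (e i t ω) ^ 2 ∂P = σ2 i)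
    (Y : ℕ → ℕ → Ω → ℝ)
    (hY : ∀ i t ω, Y i t ω = μ i + δ i * (if t₀ < t then 1 else 0) + e i t ω)
    (w : ℕ → ℝ) (hw : ∀ k ∈ Finset.Icc 1 (T - 1), 0 ≤ w k)
    (hw0 : ∃ k ∈ Finset.Icc 1 (T - 1), w k ≠ 0)
    (σhat : Ω → ℝ)
    (hσhat : ∀ ω, σhat ω = (∑ k ∈ Finset.Icc 1 (T - 1), (m ((k : ℝ) / T)) ^ 2 * w k)⁻¹ *
      ∑ k ∈ Finset.Icc 1 (T - 1), m ((k : ℝ) / T) * w k *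
        ((N : ℝ)⁻¹ * ∑ i ∈ Finset.Icc 1 N,
          (cusum T (fun t => Y i t ω) ((k : ℝ) / T)) ^ 2))
    (hTθ : ℝ)
    (hhTθ : hTθ = (∑ k ∈ Finset.Icc 1 (T - 1), (m ((k : ℝ) / T)) ^ 2 * w k)⁻¹ *
      ∑ k ∈ Finset.Icc 1 (T - 1),
        (g ((t₀ : ℝ) / T) ((k : ℝ) / T)) ^ 2 * m ((k : ℝ) / T) * w k) :
    ∫ ω, σhat ω ∂P
        = (N : ℝ)⁻¹ * ∑ i ∈ Finset.Icc 1 N, σ2 i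
          + hTθ * ((T : ℝ) / N) * ∑ i ∈ Finset.Icc 1 N, (δ i) ^ 2
      ∧ (N : ℝ)⁻¹ * ∑ i ∈ Finset.Icc 1 N, σ2 i ≤ ∫ ω, σhat ω ∂P := by
  have hT0 : T ≠ 0 := by omega
  have ht₀T : t₀ ≤ T := le_of_natCast_eq_floor_mul ht₀ hθ.2.le
  have hkT : ∀ k ∈ Icc 1 (T - 1), k ≤ T := fun k hk => (mem_Icc.1 hk).2.trans (Nat.sub_le T 1)
  have hint : ∀ i ∈ Icc 1 N, ∀ k ∈ Icc 1 (T - 1),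
      Integrable (fun ω => cusum T (fun t => Y i t ω) ((k : ℝ) / T) ^ 2) P := fun i hi k hk =>
    (memLp_cusum_of_meanShift hT0 ht₀T (hkT k hk) (hY i) (hL2 i hi)).integrable_sq
  have hterm : ∀ k ∈ Icc 1 (T - 1),
      ∫ ω, m ((k : ℝ) / T) * w k * ((N : ℝ)⁻¹ * ∑ i ∈ Icc 1 N,
        cusum T (fun t => Y i t ω) ((k : ℝ) / T) ^ 2) ∂P
      = m ((k : ℝ) / T) ^ 2 * w k * ((N : ℝ)⁻¹ * ∑ i ∈ Icc 1 N, σ2 i)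
        + g ((t₀ : ℝ) / T) ((k : ℝ) / T) ^ 2 * m ((k : ℝ) / T) * w k
          * ((T : ℝ) / N * ∑ i ∈ Icc 1 N, δ i ^ 2) := by
    intro k hk
    rw [integral_const_mul, integral_const_mul, integral_finsetSum _ fun i hi => hint i hi k hk,
      sum_congr rfl fun i hi => integral_cusum_sq_of_meanShift hT0 ht₀T (hkT k hk) (hY i)
        (hindep i hi) (hL2 i hi) (hmean i hi) (hvar i hi),
      sum_add_distrib, ← sum_mul, ← sum_mul, ← mul_sum]
    ring
  have hC := sum_m_sq_mul_pos hw hw0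
  have hexp : ∫ ω, σhat ω ∂P = (N : ℝ)⁻¹ * ∑ i ∈ Icc 1 N, σ2 i
      + hTθ * ((T : ℝ) / N) * ∑ i ∈ Icc 1 N, δ i ^ 2 := by
    simp only [hσhat]
    rw [integral_const_mul, integral_finsetSum _ fun k hk =>
        ((integrable_finsetSum _ fun i hi => hint i hi k hk).const_mul _).const_mul _,
      sum_congr rfl hterm, sum_add_distrib, ← sum_mul, ← sum_mul, mul_add, ← mul_assoc,
      inv_mul_cancel₀ hC.ne', one_mul, hhTθ]
    ring
  have hbias : 0 ≤ hTθ * ((T : ℝ) / N) * ∑ i ∈ Icc 1 N, δ i ^ 2 := by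
    have hG := sum_sq_mul_m_mul_nonneg hw fun k => g ((t₀ : ℝ) / T) ((k : ℝ) / T)
    rw [hhTθ]
    positivity
  exact ⟨hexp, hexp ▸ le_add_of_nonneg_right hbias⟩

/-- For panel data `Y i t = μ i + δ i·1(t > t₀) + e i t` with a
change at `t₀ = ⌊Tθ⌋`, the weighted least squares estimator satisfies exactly
`E[σ̂²_{N,T}(w)] = N⁻¹ ∑ σ_i² + h_T(θ;w)·(T/N)·∑ δ_i²`; in particular it is biased
upwards in the presence of a change. -/
theorem stmt16 {Ω : Type*} [MeasurableSpace Ω] (P : Measure Ω) [IsProbabilityMeasure P]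
    (N T : ℕ) (hN : 1 ≤ N) (hT : 2 ≤ T)
    (θ : ℝ) (hθ : θ ∈ Set.Ioo (0 : ℝ) 1) (t₀ : ℕ) (ht₀ : (t₀ : ℤ) = ⌊(T : ℝ) * θ⌋)
    (μ δ : ℕ → ℝ) (σ2 : ℕ → ℝ) (e : ℕ → ℕ → Ω → ℝ)
    (hmeas : ∀ i t, Measurable (e i t))
    (hindep : ∀ i ∈ Finset.Icc 1 N,
      iIndepFun (fun k : (Finset.Icc 1 T) => e i (k : ℕ)) P)
    (hL2 : ∀ i ∈ Finset.Icc 1 N, ∀ t ∈ Finset.Icc 1 T, MemLp (e i t) 2 P)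
    (hmean : ∀ i ∈ Finset.Icc 1 N, ∀ t ∈ Finset.Icc 1 T, ∫ ω, e i t ω ∂P = 0)
    (hvar : ∀ i ∈ Finset.Icc 1 N, ∀ t ∈ Finset.Icc 1 T, ∫ ω, (e i t ω) ^ 2 ∂P = σ2 i)
    (Y : ℕ → ℕ → Ω → ℝ)
    (hY : ∀ i t ω, Y i t ω = μ i + δ i * (if t₀ < t then 1 else 0) + e i t ω)
    (w : ℕ → ℝ) (hw : ∀ k ∈ Finset.Icc 1 (T - 1), 0 ≤ w k)
    (hw0 : ∃ k ∈ Finset.Icc 1 (T - 1), w k ≠ 0)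
    (σhat : Ω → ℝ)
    (hσhat : ∀ ω, σhat ω = (∑ k ∈ Finset.Icc 1 (T - 1), (m ((k : ℝ) / T)) ^ 2 * w k)⁻¹ *
      ∑ k ∈ Finset.Icc 1 (T - 1), m ((k : ℝ) / T) * w k *
        ((N : ℝ)⁻¹ * ∑ i ∈ Finset.Icc 1 N,
          (cusum T (fun t => Y i t ω) ((k : ℝ) / T)) ^ 2))
    (hTθ : ℝ)
    (hhTθ : hTθ = (∑ k ∈ Finset.Icc 1 (T - 1), (m ((k : ℝ) / T)) ^ 2 * w k)⁻¹ *
      ∑ k ∈ Finset.Icc 1 (T - 1),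
        (g ((t₀ : ℝ) / T) ((k : ℝ) / T)) ^ 2 * m ((k : ℝ) / T) * w k) :
    ∫ ω, σhat ω ∂P
        = (N : ℝ)⁻¹ * ∑ i ∈ Finset.Icc 1 N, σ2 i
          + hTθ * ((T : ℝ) / N) * ∑ i ∈ Finset.Icc 1 N, (δ i) ^ 2
      ∧ (N : ℝ)⁻¹ * ∑ i ∈ Finset.Icc 1 N, σ2 i ≤ ∫ ω, σhat ω ∂P :=
  stmt16_general P N T hT θ hθ t₀ ht₀ μ δ σ2 e hindep hL2 hmean hvar Y hY w hw hw0 σhat hσhat hTθ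
    hhTθ
end
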